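/- Let (X, σ) be a metric-like space and f : X → X. Suppose there exists Y with f(X) ⊆ Y ⊆ X such that (Y, σ) is complete (every Cauchy sequence in Y has a limit y ∈ Y with lim_{n,m→∞} σ(x_n, x_m) = σ(y,y) = lim_{n→∞} σ(x_n, y)), and there exist k ∈ [0,1) and a function ρ : [0,∞) → [0,∞) that is Lebesgue-integrable on each compact subset of [0,∞) with ∫₀^ε ρ(t) dt > 0 for all ε > 0, such that ∫₀^{σ(fx,fy)} ρ(t) dt ≤ k·∫₀^{σ(x,y)} ρ(t) dt for all x, y ∈ X. Then f has a unique fixed point. -/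

import Mathlib

open Filter Topology MeasureTheory

/-- A metric-like (dislocated) function on `X`:
nonnegativity, (σ1) `σ x y = 0 → x = y`, (σ2) symmetry, (σ3) triangle inequality. -/
def MetricLike {X : Type*} (σ : X → X → ℝ) : Prop :=
  (∀ x y, 0 ≤ σ x y) ∧ (∀ x y, σ x y = 0 → x = y) ∧
    (∀ x y, σ x y = σ y x) ∧ (∀ x y z, σ x y ≤ σ x z + σ z y)

/-- Convergence of a sequence w.r.t. the topology `τ_σ`:
`lim_n σ (u n) x = σ x x`. -/
def ConvergesTo {X : Type*} (σ : X → X → ℝ) (u : ℕ → X) (x : X) : Prop :=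
  Tendsto (fun n => σ (u n) x) atTop (𝓝 (σ x x))

/-- A sequence is Cauchy if `lim_{n,m} σ (u n) (u m)` exists and is finite. -/
def IsCauchyML {X : Type*} (σ : X → X → ℝ) (u : ℕ → X) : Prop :=
  ∃ L : ℝ, Tendsto (fun q : ℕ × ℕ => σ (u q.1) (u q.2)) atTop (𝓝 L)

/-- A sequence is `R`-preserving if consecutive terms are `R`-related. -/
def RPreserving {X : Type*} (R : X → X → Prop) (u : ℕ → X) : Prop :=
  ∀ n, R (u n) (u (n + 1))

/-- `(Y, σ)` is `R`-complete: every `R`-preserving Cauchy sequence in `Y` has a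
limit `x ∈ Y` with `lim_{n,m} σ (u n) (u m) = σ x x = lim_n σ (u n) x`. -/
def RCompleteOn {X : Type*} (σ : X → X → ℝ) (R : X → X → Prop) (Y : Set X) : Prop :=
  ∀ u : ℕ → X, (∀ n, u n ∈ Y) → RPreserving R u → IsCauchyML σ u →
    ∃ x ∈ Y, Tendsto (fun q : ℕ × ℕ => σ (u q.1) (u q.2)) atTop (𝓝 (σ x x)) ∧
      ConvergesTo σ u x

/-- `(Y, σ)` is complete: every Cauchy sequence in `Y` has a limit `x ∈ Y` with
`lim_{n,m} σ (u n) (u m) = σ x x = lim_n σ (u n) x`. -/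
def CompleteOn {X : Type*} (σ : X → X → ℝ) (Y : Set X) : Prop :=
  ∀ u : ℕ → X, (∀ n, u n ∈ Y) → IsCauchyML σ u →
    ∃ x ∈ Y, Tendsto (fun q : ℕ × ℕ => σ (u q.1) (u q.2)) atTop (𝓝 (σ x x)) ∧
      ConvergesTo σ u x

/-- `R` is `f`-closed: `R x y → R (f x) (f y)`. -/
def FClosed {X : Type*} (R : X → X → Prop) (f : X → X) : Prop :=
  ∀ x y, R x y → R (f x) (f y)

/-- `f` is `R`-continuous-like: it preserves limits of `R`-preserving sequences. -/
def RContinuousLike {X : Type*} (σ : X → X → ℝ) (R : X → X → Prop) (f : X → X) : Prop :=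
  ∀ (u : ℕ → X) (x : X), RPreserving R u → ConvergesTo σ u x →
    ConvergesTo σ (fun n => f (u n)) (f x)

/-- `f` is continuous-like: it preserves limits of sequences w.r.t. `τ_σ`. -/
def ContinuousLike {X : Type*} (σ : X → X → ℝ) (f : X → X) : Prop :=
  ∀ (u : ℕ → X) (x : X), ConvergesTo σ u x → ConvergesTo σ (fun n => f (u n)) (f x)

/-- `R` is `σ`-self-closed: every `R`-preserving sequence converging to `x` has a
subsequence whose terms are `R`-comparable with `x`. -/
def SelfClosed {X : Type*} (σ : X → X → ℝ) (R : X → X → Prop) : Prop :=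
  ∀ (u : ℕ → X) (x : X), RPreserving R u → ConvergesTo σ u x →
    ∃ φ : ℕ → ℕ, StrictMono φ ∧ ∀ k, R (u (φ k)) x ∨ R x (u (φ k))

/-- The restriction of the relation `R` to a subset `Y`. -/
def Restrict {X : Type*} (R : X → X → Prop) (Y : Set X) : X → X → Prop :=
  fun x y => R x y ∧ x ∈ Y ∧ y ∈ Y

/-- There is a path of some (positive, finite) length from `a` to `b` in `R^s`:
a finite sequence `z 0 = a, …, z l = b` with `[z i, z (i+1)] ∈ R` for `i < l`. -/
def PathIn {X : Type*} (R : X → X → Prop) (a b : X) : Prop :=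
  ∃ (l : ℕ) (z : ℕ → X), 0 < l ∧ z 0 = a ∧ z l = b ∧
    ∀ i < l, R (z i) (z (i + 1)) ∨ R (z (i + 1)) (z i)

/-!
The integral condition turns into a Meir–Keeler condition: `F a = ∫ t in [0, a], ρ t` is monotone,
positive on `(0, ∞)` and continuous there, so `k * F (ε + δ) < F ε` for small `δ > 0`, and then
`σ x y < ε + δ` forces `σ (f x) (f y) < ε`. A Meir–Keeler map of a metric-like space is
nonexpansive and strictly contractive off the diagonal; along an orbit the consecutive distances
decrease to `0`, and (taking `δ ≤ ε`) the condition keeps every later point of the orbit within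
`ε + δ / 2` of an orbit point whose step is below `δ / 2`. So orbits are Cauchy with limit `0`, and the limit provided by
completeness of `Y` is the unique fixed point.
-/

open Set Function

namespace MetricLike

variable {X : Type*} {σ : X → X → ℝ}

theorem self_le_two_mul (hσ : MetricLike σ) (x y : X) : σ x x ≤ 2 * σ x y := by
  linarith [hσ.2.2.2 x x y, hσ.2.2.1 y x]

end MetricLike

/-- The Meir–Keeler condition without the lower bound `ε ≤ σ x y`: in a metric-like space
`σ x x` need not vanish, so pairs with small `σ x y` have to be constrained as well. -/
def IsMeirKeeler {X : Type*} (σ : X → X → ℝ) (f : X → X) : Prop :=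
  ∀ ε > 0, ∃ δ > 0, ∀ x y, σ x y < ε + δ → σ (f x) (f y) < ε

namespace IsMeirKeeler

variable {X : Type*} {σ : X → X → ℝ} {f : X → X}

theorem dist_map_le (hσ : MetricLike σ) (hf : IsMeirKeeler σ f) (x y : X) :
    σ (f x) (f y) ≤ σ x y := by
  refine le_of_forall_pos_lt_add fun ε hε => ?_
  obtain ⟨δ, hδ, hfδ⟩ := hf (σ x y + ε) (by linarith [hσ.1 x y])
  exact hfδ x y (by linarith)

theorem dist_map_lt (hf : IsMeirKeeler σ f) {x y : X} (hxy : 0 < σ x y) :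
    σ (f x) (f y) < σ x y := by
  obtain ⟨δ, hδ, hfδ⟩ := hf (σ x y) hxy
  exact hfδ x y (lt_add_of_pos_right _ hδ)

theorem tendsto_dist_iterate_succ (hσ : MetricLike σ) (hf : IsMeirKeeler σ f) (x : X) :
    Tendsto (fun n => σ (f^[n] x) (f^[n + 1] x)) atTop (𝓝 0) := by
  set d : ℕ → ℝ := fun n => σ (f^[n] x) (f^[n + 1] x)
  have hd_anti : Antitone d := antitone_nat_of_succ_le fun n => by
    simp only [d, iterate_succ_apply']
    exact hf.dist_map_le hσ _ _
  have hd_bdd : BddBelow (range d) := ⟨0, forall_mem_range.2 fun n => hσ.1 _ _⟩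
  have hd_lim := tendsto_atTop_ciInf hd_anti hd_bdd
  set L := ⨅ n, d n
  have hL : L = 0 := by
    refine le_antisymm (not_lt.1 fun hLpos => ?_) (le_ciInf fun n => hσ.1 _ _)
    obtain ⟨δ, hδ, hfδ⟩ := hf L hLpos
    obtain ⟨n, hn⟩ := (hd_lim.eventually (gt_mem_nhds (lt_add_of_pos_right L hδ))).exists
    have hstep : d (n + 1) < L := by
      simp only [d, iterate_succ_apply'] at hn ⊢
      exact hfδ _ _ hn
    exact (ciInf_le hd_bdd (n + 1)).not_gt hstep
  rwa [hL] at hd_lim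

theorem eventually_dist_iterate_add_lt (hσ : MetricLike σ) (hf : IsMeirKeeler σ f) (x : X)
    {ε : ℝ} (hε : 0 < ε) : ∀ᶠ n in atTop, ∀ j, σ (f^[n] x) (f^[n + j] x) < 2 * ε := by
  obtain ⟨δ, hδ, hfδ⟩ := hf ε hε
  set η := min δ ε
  have hη : 0 < η := lt_min hδ hε
  have hηδ : η ≤ δ := min_le_left δ ε
  have hηε : η ≤ ε := min_le_right δ ε
  filter_upwards [(hf.tendsto_dist_iterate_succ hσ x).eventually (gt_mem_nhds (half_pos hη))]
    with n hn
  have hbound : ∀ j, σ (f^[n] x) (f^[n + j] x) < ε + η / 2 := by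
    intro j
    induction j with
    | zero =>
      rw [add_zero]
      linarith [hσ.self_le_two_mul (f^[n] x) (f^[n + 1] x)]
    | succ j ih =>
      have hmap : σ (f^[n + 1] x) (f^[n + j + 1] x) < ε := by
        simp only [iterate_succ_apply']
        exact hfδ _ _ (by linarith)
      rw [← add_assoc]
      linarith [hσ.2.2.2 (f^[n] x) (f^[n + j + 1] x) (f^[n + 1] x)]
  exact fun j => by linarith [hbound j]

theorem tendsto_dist_iterate (hσ : MetricLike σ) (hf : IsMeirKeeler σ f) (x : X) :
    Tendsto (fun p : ℕ × ℕ => σ (f^[p.1] x) (f^[p.2] x)) atTop (𝓝 0) := by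
  refine Metric.tendsto_atTop.2 fun ε hε => ?_
  obtain ⟨N, hN⟩ := eventually_atTop.1 (hf.eventually_dist_iterate_add_lt hσ x (half_pos hε))
  refine ⟨(N, N), fun ⟨n, m⟩ ⟨hn, hm⟩ => ?_⟩
  rw [Real.dist_eq, sub_zero, abs_of_nonneg (hσ.1 _ _)]
  rcases le_total n m with h | h
  · obtain ⟨j, rfl⟩ := Nat.exists_eq_add_of_le h
    linarith [hN n hn j]
  · obtain ⟨j, rfl⟩ := Nat.exists_eq_add_of_le h
    rw [hσ.2.2.1]
    linarith [hN m hm j]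

end IsMeirKeeler

theorem MetricLike.isFixedPt_of_tendsto {X : Type*} {σ : X → X → ℝ} {f : X → X}
    (hσ : MetricLike σ) (hf : ∀ x y, σ (f x) (f y) ≤ σ x y) {u : ℕ → X}
    (hu : ∀ n, u (n + 1) = f (u n)) {x : X} (hux : Tendsto (fun n => σ (u n) x) atTop (𝓝 0)) :
    IsFixedPt f x := by
  have hbound : ∀ n, σ (f x) x ≤ σ (u n) x + σ (u (n + 1)) x := fun n => by
    linarith [hσ.2.2.2 (f x) x (u (n + 1)), hu n ▸ hf x (u n), hσ.2.2.1 x (u n)]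
  have hlim : Tendsto (fun n => σ (u n) x + σ (u (n + 1)) x) atTop (𝓝 0) := by
    simpa using hux.add (hux.comp (tendsto_add_atTop_nat 1))
  exact hσ.2.1 _ _ (le_antisymm (ge_of_tendsto' hlim hbound) (hσ.1 _ _))

theorem IsMeirKeeler.existsUnique_fixedPoint {X : Type*} [Nonempty X] {σ : X → X → ℝ}
    {f : X → X} (hσ : MetricLike σ) (hf : IsMeirKeeler σ f) {Y : Set X} (hfY : range f ⊆ Y)
    (hY : CompleteOn σ Y) : ∃! x, f x = x := by
  obtain ⟨z⟩ := ‹Nonempty X›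
  have horbit : ∀ n, f^[n] (f z) ∈ Y := fun n => hfY ⟨f^[n] z, (iterate_succ_apply' f n z).symm⟩
  have hcauchy := hf.tendsto_dist_iterate hσ (f z)
  obtain ⟨x, -, hxx, hux⟩ := hY _ horbit ⟨0, hcauchy⟩
  rw [ConvergesTo, tendsto_nhds_unique hxx hcauchy] at hux
  have hfix : f x = x :=
    hσ.isFixedPt_of_tendsto (hf.dist_map_le hσ) (fun n => iterate_succ_apply' f n (f z)) hux
  refine ⟨x, hfix, fun y hy => by_contra fun hne => ?_⟩
  have hpos : 0 < σ y x := (hσ.1 y x).lt_of_ne fun h => hne (hσ.2.1 y x h.symm)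
  simpa [hy, hfix] using hf.dist_map_lt hpos

section IntegralContraction

variable {ρ : ℝ → ℝ}

theorem monotone_integral_Icc_zero (hρ0 : ∀ t ∈ Ici (0 : ℝ), 0 ≤ ρ t)
    (hρint : ∀ b, IntegrableOn ρ (Icc 0 b)) : Monotone fun a => ∫ t in Icc 0 a, ρ t :=
  fun _ b hab => setIntegral_mono_set (hρint b)
    (ae_restrict_of_forall_mem measurableSet_Icc fun t ht => hρ0 t ht.1)
    (Icc_subset_Icc_right hab).eventuallyLE

theorem continuousAt_integral_Icc_zero (hρint : ∀ b, IntegrableOn ρ (Icc 0 b)) {a : ℝ}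
    (ha : 0 < a) : ContinuousAt (fun a => ∫ t in Icc 0 a, ρ t) a :=
  (intervalIntegral.continuousOn_primitive_Icc (hρint (a + 1))).continuousAt
    (Icc_mem_nhds ha (lt_add_one a))

theorem isMeirKeeler_of_integral_le {X : Type*} {σ : X → X → ℝ} {f : X → X} {k : ℝ}
    (hk0 : 0 ≤ k) (hk1 : k < 1) (hρ0 : ∀ t ∈ Ici (0 : ℝ), 0 ≤ ρ t)
    (hρint : ∀ b, IntegrableOn ρ (Icc 0 b)) (hρpos : ∀ ε : ℝ, 0 < ε → 0 < ∫ t in Icc 0 ε, ρ t)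
    (he : ∀ x y, (∫ t in Icc 0 (σ (f x) (f y)), ρ t) ≤ k * ∫ t in Icc 0 (σ x y), ρ t) :
    IsMeirKeeler σ f := by
  set F : ℝ → ℝ := fun a => ∫ t in Icc 0 a, ρ t
  have hF : Monotone F := monotone_integral_Icc_zero hρ0 hρint
  intro ε hε
  have hnear : ∀ᶠ t in 𝓝 ε, k * F t < F ε :=
    (continuousAt_const.mul (continuousAt_integral_Icc_zero hρint hε)).eventually
      (gt_mem_nhds (mul_lt_of_lt_one_left (hρpos ε hε) hk1))
  obtain ⟨δ, hδ, hδF⟩ := Metric.eventually_nhds_iff.1 hnear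
  refine ⟨δ / 2, half_pos hδ, fun x y hxy => hF.reflect_lt ?_⟩
  calc F (σ (f x) (f y)) ≤ k * F (σ x y) := he x y
    _ ≤ k * F (ε + δ / 2) := mul_le_mul_of_nonneg_left (hF hxy.le) hk0
    _ < F ε := hδF (by rw [Real.dist_eq, add_sub_cancel_left, abs_of_pos (half_pos hδ)]; linarith)

end IntegralContraction

/-- Corollary 5: Branciari-type integral contraction principle in metric-like
spaces (completeness only needed on a subset `Y ⊇ f(X)`). -/
theorem banach_integralType_metricLike {X : Type*} [Nonempty X] (σ : X → X → ℝ)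
    (f : X → X) (hML : MetricLike σ)
    (Y : Set X) (hfY : Set.range f ⊆ Y) (ha : CompleteOn σ Y)
    (k : ℝ) (hk0 : 0 ≤ k) (hk1 : k < 1)
    (ρ : ℝ → ℝ) (hρ0 : ∀ t ∈ Set.Ici (0 : ℝ), 0 ≤ ρ t)
    (hρint : ∀ K : Set ℝ, K ⊆ Set.Ici (0 : ℝ) → IsCompact K → IntegrableOn ρ K)
    (hρpos : ∀ ε : ℝ, 0 < ε → 0 < ∫ t in Set.Icc (0 : ℝ) ε, ρ t)
    (he : ∀ x y : X,
      (∫ t in Set.Icc (0 : ℝ) (σ (f x) (f y)), ρ t) ≤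
        k * ∫ t in Set.Icc (0 : ℝ) (σ x y), ρ t) :
    ∃! x, f x = x :=
  (isMeirKeeler_of_integral_le hk0 hk1 hρ0 (fun _ => hρint _ Icc_subset_Ici_self isCompact_Icc)
    hρpos he).existsUnique_fixedPoint hML hfY ha
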